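/- Kron reduction increases edge weights monotonically: if Q is a loopy Laplacian, α a reachable subset, and A, A_red are the adjacency matrices of the original and Kron-reduced graphs, then A_red,ij ≥ A_ij for all i, j ∈ α; equivalently Q_red,ij ≤ Q_ij for all distinct i, j ∈ α. -/
import Mathlib


open Matrix Finset

/-- The submatrix of `A` with rows in `s` and columns in `t`. -/
noncomputable def subm {ι : Type*} [Fintype ι] [DecidableEq ι]
    (A : Matrix ι ι ℝ) (s t : Finset ι) : Matrix s t ℝ :=
  Matrix.of fun i j => A i j

/-- The Schur complement `A/A[αᶜ,αᶜ]`, i.e. the Kron reduction keeping the nodes of `α`. -/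
noncomputable def schur {ι : Type*} [Fintype ι] [DecidableEq ι]
    (A : Matrix ι ι ℝ) (α : Finset ι) : Matrix α α ℝ :=
  subm A α α - subm A α αᶜ * (subm A αᶜ αᶜ)⁻¹ * subm A αᶜ α

/-- The loopy Laplacian `Q = D - A + diag(Aᵢᵢ)` of the graph with adjacency matrix `A`. -/
noncomputable def loopyLap {n : ℕ} (A : Matrix (Fin n) (Fin n) ℝ) : Matrix (Fin n) (Fin n) ℝ :=
  Matrix.of fun i j => if i = j then ∑ k, A i k else -A i j

/-- The loop-less Laplacian `L = D - A` of the graph with adjacency matrix `A`. -/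
noncomputable def looplessLap {n : ℕ} (A : Matrix (Fin n) (Fin n) ℝ) : Matrix (Fin n) (Fin n) ℝ :=
  Matrix.of fun i j => if i = j then (∑ k, A i k) - A i i else -A i j

/-- `α` is a reachable subset: every interior node has a directed path to some boundary node. -/
def ReachableSubset {n : ℕ} (A : Matrix (Fin n) (Fin n) ℝ) (α : Finset (Fin n)) : Prop :=
  ∀ i ∉ α, ∃ j ∈ α, Relation.ReflTransGen (fun u v => 0 < A u v) i j

/-- Row-split identity for the loopy Laplacian. -/
lemma lap_row_split {n : ℕ} (A : Matrix (Fin n) (Fin n) ℝ)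
    (s : Finset (Fin n)) (u : Fin n) (hu : u ∈ s) :
    ∑ m ∈ s, loopyLap A u m = A u u + ∑ m ∈ sᶜ, A u m := by
  rw [← Finset.add_sum_erase s _ hu]
  have h1 : loopyLap A u u = ∑ k, A u k := by simp [loopyLap]
  have h2 : ∑ m ∈ s.erase u, loopyLap A u m = -∑ m ∈ s.erase u, A u m := by
    rw [← Finset.sum_neg_distrib]
    refine Finset.sum_congr rfl fun m hm => ?_
    have : u ≠ m := (Finset.ne_of_mem_erase hm).symm
    simp [loopyLap, this]
  have h3 : (univ : Finset (Fin n)) \ s.erase u = insert u sᶜ := by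
    ext m; simp [Finset.mem_erase]; tauto
  have h4 : ∑ m ∈ (univ : Finset (Fin n)) \ s.erase u, A u m + ∑ m ∈ s.erase u, A u m
      = ∑ k, A u k := Finset.sum_sdiff (Finset.subset_univ _)
  have h5 : ∑ m ∈ (univ : Finset (Fin n)) \ s.erase u, A u m = A u u + ∑ m ∈ sᶜ, A u m := by
    rw [h3, Finset.sum_insert (by simpa using hu)]
  rw [h1, h2]; linarith


/-- Minimum principle: if `B x ≥ 0` entrywise for the interior block `B` of the loopy
Laplacian, then `x ≥ 0`. -/
lemma key_min {n : ℕ} (A : Matrix (Fin n) (Fin n) ℝ) (hA : ∀ i j, 0 ≤ A i j)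
    (α : Finset (Fin n)) (hreach : ReachableSubset A α)
    (x : ↥(αᶜ : Finset (Fin n)) → ℝ)
    (hx : ∀ k, 0 ≤ (subm (loopyLap A) αᶜ αᶜ *ᵥ x) k) : ∀ k, 0 ≤ x k := by
  by_contra hcon
  push_neg at hcon
  obtain ⟨k1, hk1⟩ := hcon
  obtain ⟨k₀, -, hk₀⟩ := Finset.exists_min_image Finset.univ x ⟨k1, Finset.mem_univ k1⟩
  set μ := x k₀ with hμdef
  have hμ : μ < 0 := lt_of_le_of_lt (hk₀ k1 (mem_univ k1)) hk1
  set y : Fin n → ℝ := fun m => if h : m ∈ (αᶜ : Finset (Fin n)) then x ⟨m, h⟩ else 0 with hydef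
  have hy : ∀ l : ↥(αᶜ : Finset (Fin n)), y ↑l = x l := fun l => by
    simp only [hydef, l.2, dif_pos, Subtype.coe_eta]
  have hymin : ∀ m, m ∈ (αᶜ : Finset (Fin n)) → μ ≤ y m := by
    intro m hm
    have := hk₀ ⟨m, hm⟩ (mem_univ _)
    rw [← hy ⟨m, hm⟩] at this
    exact this
  -- the row step
  have row : ∀ u, ∀ hu : u ∈ (αᶜ : Finset (Fin n)), y u = μ →
      ∀ v, 0 < A u v → v ∈ (αᶜ : Finset (Fin n)) ∧ y v = μ := by
    intro u hu hyu v hv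
    have h0 := hx ⟨u, hu⟩
    have hsum : (subm (loopyLap A) αᶜ αᶜ *ᵥ x) ⟨u, hu⟩
        = ∑ m ∈ (αᶜ : Finset (Fin n)), loopyLap A u m * y m := by
      rw [← Finset.sum_coe_sort (αᶜ : Finset (Fin n)) (fun m => loopyLap A u m * y m)]
      simp only [Matrix.mulVec, dotProduct, subm, Matrix.of_apply]
      exact Finset.sum_congr rfl fun l _ => by rw [hy]
    rw [hsum, ← Finset.add_sum_erase _ _ hu] at h0
    set E := (αᶜ : Finset (Fin n)).erase u with hE
    set T := ∑ k, A u k with hT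
    set S := ∑ m ∈ E, A u m with hS
    have hQuu : loopyLap A u u * y u = T * μ := by rw [hyu]; simp [loopyLap, hT]
    have hEA : ∀ m ∈ E, loopyLap A u m * y m = -(A u m * y m) := by
      intro m hm
      have : u ≠ m := (Finset.ne_of_mem_erase hm).symm
      simp [loopyLap, this]
    have h0' : 0 ≤ T * μ - ∑ m ∈ E, A u m * y m := by
      rw [hQuu, Finset.sum_congr rfl hEA, Finset.sum_neg_distrib] at h0
      linarith
    have hlow : S * μ ≤ ∑ m ∈ E, A u m * y m := by
      rw [hS, Finset.sum_mul]
      refine Finset.sum_le_sum fun m hm => ?_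
      exact mul_le_mul_of_nonneg_left (hymin m (Finset.mem_of_mem_erase hm)) (hA u m)
    have hST : S ≤ T := by
      rw [hS, hT]
      exact Finset.sum_le_sum_of_subset_of_nonneg (Finset.subset_univ _)
        (fun m _ _ => hA u m)
    have hTS : T = S := by nlinarith
    have hnn : ∀ m ∈ E, 0 ≤ A u m * (y m - μ) := fun m hm =>
      mul_nonneg (hA u m) (by linarith [hymin m (Finset.mem_of_mem_erase hm)])
    have hsum0 : ∑ m ∈ E, A u m * (y m - μ) = 0 := by
      have hle : ∑ m ∈ E, A u m * (y m - μ) ≤ 0 := by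
        have : ∑ m ∈ E, A u m * (y m - μ) = (∑ m ∈ E, A u m * y m) - S * μ := by
          rw [hS, Finset.sum_mul, ← Finset.sum_sub_distrib]
          exact Finset.sum_congr rfl fun m _ => by ring
        rw [this]; rw [hTS] at h0'; linarith
      exact le_antisymm hle (Finset.sum_nonneg hnn)
    have hterm := (Finset.sum_eq_zero_iff_of_nonneg hnn).1 hsum0
    -- outside E the row of A vanishes
    have hout : ∀ m, m ∉ E → A u m = 0 := by
      intro m hm
      have hsd : ∑ m ∈ (univ : Finset (Fin n)) \ E, A u m + S = T :=
        Finset.sum_sdiff (Finset.subset_univ _)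
      have hz : ∑ m ∈ (univ : Finset (Fin n)) \ E, A u m = 0 := by linarith
      have := (Finset.sum_eq_zero_iff_of_nonneg (fun m _ => hA u m)).1 hz m
        (Finset.mem_sdiff.2 ⟨mem_univ m, hm⟩)
      exact this
    have hvE : v ∈ E := by
      by_contra hvE
      exact absurd (hout v hvE) (ne_of_gt hv)
    refine ⟨Finset.mem_of_mem_erase hvE, ?_⟩
    have := hterm v hvE
    have hAv : A u v ≠ 0 := ne_of_gt hv
    have : y v - μ = 0 := by
      rcases mul_eq_zero.1 this with h | h
      · exact absurd h hAv
      · exact h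
    linarith
  -- propagate along the path
  have hk₀c : (↑k₀ : Fin n) ∈ (αᶜ : Finset (Fin n)) := k₀.2
  have hk₀α : (↑k₀ : Fin n) ∉ α := Finset.mem_compl.mp hk₀c
  obtain ⟨j, hj, hpath⟩ := hreach ↑k₀ hk₀α
  have prop : ∀ u, Relation.ReflTransGen (fun a b => 0 < A a b) ↑k₀ u →
      u ∈ (αᶜ : Finset (Fin n)) ∧ y u = μ := by
    intro u h
    induction h with
    | refl => exact ⟨hk₀c, hy k₀⟩
    | tail hab hbc ih => exact row _ ih.1 ih.2 _ hbc
  have := (prop j hpath).1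
  simp only [Finset.mem_compl] at this
  exact this hj


lemma B_isUnit {n : ℕ} (A : Matrix (Fin n) (Fin n) ℝ) (hA : ∀ i j, 0 ≤ A i j)
    (α : Finset (Fin n)) (hreach : ReachableSubset A α) :
    IsUnit (subm (loopyLap A) αᶜ αᶜ).det := by
  set B := subm (loopyLap A) αᶜ αᶜ with hB
  rw [← Matrix.isUnit_iff_isUnit_det]
  rw [← Matrix.mulVec_injective_iff_isUnit]
  have h0 : ∀ x, B *ᵥ x = 0 → x = 0 := by
    intro x hx
    have h1 := key_min A hA α hreach x (fun k => by rw [hx]; simp)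
    have h2 := key_min A hA α hreach (-x) (fun k => by
      rw [Matrix.mulVec_neg, hx]; simp)
    funext k
    have := h2 k
    simp only [Pi.neg_apply] at this
    have := h1 k
    simp only [Pi.zero_apply]
    linarith [h1 k, h2 k]
  intro a b hab
  have : B *ᵥ (a - b) = 0 := by rw [Matrix.mulVec_sub, hab, sub_self]
  have := h0 _ this
  exact sub_eq_zero.1 this

lemma Binv_nonneg {n : ℕ} (A : Matrix (Fin n) (Fin n) ℝ) (hA : ∀ i j, 0 ≤ A i j)
    (α : Finset (Fin n)) (hreach : ReachableSubset A α) :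
    ∀ k l, 0 ≤ (subm (loopyLap A) αᶜ αᶜ)⁻¹ k l := by
  intro k l
  set B := subm (loopyLap A) αᶜ αᶜ with hB
  set x : ↥(αᶜ : Finset (Fin n)) → ℝ := B⁻¹ *ᵥ Pi.single l 1 with hxdef
  have hBx : B *ᵥ x = Pi.single l 1 := by
    rw [hxdef, Matrix.mulVec_mulVec, Matrix.mul_nonsing_inv B (B_isUnit A hA α hreach),
      Matrix.one_mulVec]
  have hnn := key_min A hA α hreach x (fun m => by
    rw [hBx]
    rcases eq_or_ne m l with h | h
    · subst h; simp
    · simp [Pi.single_apply, h])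
  have hxk : x k = B⁻¹ k l := by
    simp [hxdef, Matrix.mulVec_single]
  rw [← hxk]
  exact hnn k


/-- Kron reduction increases edge weights monotonically: `A_red,ij ≥ A_ij` for all `i, j ∈ α`
(the reduced adjacency is `A_red,ij = -Q_red,ij` for `i ≠ j` and `A_red,ii = ∑ⱼ Q_red,ij`);
equivalently `Q_red,ij ≤ Q_ij` for distinct `i, j ∈ α`. -/
theorem kron_reduction_monotone {n : ℕ} (A : Matrix (Fin n) (Fin n) ℝ)
    (hA : ∀ i j, 0 ≤ A i j) (α : Finset (Fin n)) (hreach : ReachableSubset A α) :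
    (∀ i j : α, i ≠ j → A (i : Fin n) (j : Fin n) ≤ -(schur (loopyLap A) α i j)) ∧
    (∀ i : α, A (i : Fin n) (i : Fin n) ≤ ∑ j, schur (loopyLap A) α i j) ∧
    (∀ i j : α, i ≠ j → schur (loopyLap A) α i j ≤ loopyLap A (i : Fin n) (j : Fin n)) := by
  set Q := loopyLap A with hQdef
  set B := subm Q αᶜ αᶜ with hBdef
  set P := subm Q α αᶜ * B⁻¹ * subm Q αᶜ α with hPdef
  have hQoff : ∀ i j : Fin n, i ≠ j → Q i j = -A i j := by
    intro i j hij; simp [hQdef, loopyLap, hij]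
  have hcoe : ∀ (i : ↥α) (k : ↥(αᶜ : Finset (Fin n))), (↑i : Fin n) ≠ ↑k := by
    intro i k h
    exact (Finset.mem_compl.mp k.2) (h ▸ i.2)
  have hinv := Binv_nonneg A hA α hreach
  -- nonnegativity of the correction term P
  have hP : ∀ i j : ↥α, 0 ≤ P i j := by
    intro i j
    rw [hPdef, Matrix.mul_apply]
    refine Finset.sum_nonneg fun l _ => ?_
    rw [Matrix.mul_apply, Finset.sum_mul]
    refine Finset.sum_nonneg fun k _ => ?_
    have h1 : subm Q α αᶜ i k ≤ 0 := by
      show Q ↑i ↑k ≤ 0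
      rw [hQoff _ _ (hcoe i k)]
      simp [hA]
    have h2 : subm Q αᶜ α l j ≤ 0 := by
      show Q ↑l ↑j ≤ 0
      rw [hQoff _ _ (Ne.symm (hcoe j l))]
      simp [hA]
    nlinarith [mul_nonpos_of_nonpos_of_nonneg h1 (hinv k l), h2]
  have hschur : ∀ i j : ↥α, schur Q α i j = Q ↑i ↑j - P i j := by
    intro i j
    rw [schur, Matrix.sub_apply]
    rfl
  have part3 : ∀ i j : ↥α, i ≠ j → schur Q α i j ≤ Q ↑i ↑j := by
    intro i j hij
    rw [hschur]
    linarith [hP i j]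
  refine ⟨?_, ?_, fun i j hij => part3 i j hij⟩
  · intro i j hij
    have hij' : (↑i : Fin n) ≠ ↑j := fun h => hij (Subtype.ext h)
    have := part3 i j hij
    rw [hQoff _ _ hij'] at this
    linarith
  · -- row sums
    intro i
    -- w = Qca *ᵥ 1, v = B⁻¹ *ᵥ w
    set one : ↥α → ℝ := fun _ => 1 with honedef
    set onec : ↥(αᶜ : Finset (Fin n)) → ℝ := fun _ => 1 with honecdef
    set w : ↥(αᶜ : Finset (Fin n)) → ℝ := subm Q αᶜ α *ᵥ one with hwdef
    set v : ↥(αᶜ : Finset (Fin n)) → ℝ := B⁻¹ *ᵥ w with hvdef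
    have hw : ∀ k, w k = -∑ j ∈ α, A ↑k j := by
      intro k
      rw [hwdef]
      show ∑ j : ↥α, Q ↑k ↑j * one j = _
      rw [← Finset.sum_neg_distrib,
        ← Finset.sum_coe_sort α (fun m => -A (↑k : Fin n) m)]
      refine Finset.sum_congr rfl fun j _ => ?_
      rw [honedef, mul_one, hQoff _ _ (Ne.symm (hcoe j k))]
    have hBv : B *ᵥ v = w := by
      rw [hvdef, Matrix.mulVec_mulVec, Matrix.mul_nonsing_inv B (B_isUnit A hA α hreach),
        Matrix.one_mulVec]
    have hB1 : ∀ k, (B *ᵥ onec) k = A ↑k ↑k + ∑ m ∈ α, A ↑k m := by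
      intro k
      show ∑ l : ↥(αᶜ : Finset (Fin n)), Q ↑k ↑l * onec l = _
      have : ∑ l : ↥(αᶜ : Finset (Fin n)), Q ↑k ↑l * onec l
          = ∑ m ∈ (αᶜ : Finset (Fin n)), loopyLap A ↑k m := by
        rw [← Finset.sum_coe_sort (αᶜ : Finset (Fin n)) (fun m => loopyLap A (↑k : Fin n) m)]
        exact Finset.sum_congr rfl fun l _ => by rw [honecdef, mul_one]
      rw [this, lap_row_split A αᶜ ↑k k.2, compl_compl α]
    have hvle : ∀ k, v k ≤ 0 := by
      have := key_min A hA α hreach (-v) (fun k => by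
        rw [Matrix.mulVec_neg, hBv]
        simp only [Pi.neg_apply]
        rw [hw k]
        simp only [neg_neg]
        exact Finset.sum_nonneg fun m _ => hA _ m)
      intro k
      have := this k
      simp only [Pi.neg_apply] at this
      linarith
    have hvge : ∀ k, -1 ≤ v k := by
      have := key_min A hA α hreach (v + onec) (fun k => by
        rw [Matrix.mulVec_add, hBv]
        simp only [Pi.add_apply]
        rw [hw k, hB1 k]
        have := hA (↑k : Fin n) ↑k
        linarith)
      intro k
      have := this k
      simp only [Pi.add_apply, honecdef] at this
      linarith
    -- sum of P over the row
    have hPsum : ∑ j, P i j = ∑ k : ↥(αᶜ : Finset (Fin n)), Q ↑i ↑k * v k := by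
      have h1 : ∑ j, P i j = (P *ᵥ one) i := by
        show _ = ∑ j, P i j * one j
        refine Finset.sum_congr rfl fun j _ => by rw [honedef, mul_one]
      rw [h1, hPdef, ← Matrix.mulVec_mulVec, ← Matrix.mulVec_mulVec, ← hwdef, ← hvdef]
      rfl
    have hPbound : ∑ j, P i j ≤ ∑ k ∈ (αᶜ : Finset (Fin n)), A ↑i k := by
      rw [hPsum, ← Finset.sum_coe_sort (αᶜ : Finset (Fin n)) (fun m => A (↑i : Fin n) m)]
      refine Finset.sum_le_sum fun k _ => ?_
      rw [hQoff _ _ (hcoe i k)]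
      nlinarith [hA (↑i : Fin n) ↑k, hvle k, hvge k]
    have hQrow : ∑ j : ↥α, Q ↑i ↑j = A ↑i ↑i + ∑ m ∈ αᶜ, A ↑i m := by
      rw [Finset.sum_coe_sort α (fun m => Q (↑i : Fin n) m)]
      exact lap_row_split A α ↑i i.2
    have hsplit : ∑ j, schur Q α i j = (∑ j : ↥α, Q ↑i ↑j) - ∑ j, P i j := by
      rw [← Finset.sum_sub_distrib]
      exact Finset.sum_congr rfl fun j _ => hschur i j
    rw [hsplit, hQrow]
    linarith
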